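/- arXiv:1911.00254 — 6 statements merged into one kernel-verified Lean document; each statement's English description precedes it below -/
import Mathlib

section
/- Let q, Q ∈ ℂ with |q| < 1 and |Q| < 1. Then the series Σ_{d≥0} Q^d / (q;q)_d converges absolutely (note that (q;q)_d = ∏_{r=1}^d (1-q^r) ≠ 0), the infinite product (Q;q)_∞ = ∏_{r≥0}(1-q^r Q) is nonzero, and Σ_{d≥0} Q^d/(q;q)_d = 1/(Q;q)_∞. -/
open Filter Topology

noncomputable def qa (q : ℂ) (d : ℕ) : ℂ := ∏ r ∈ Finset.range d, (1 - q ^ (r + 1))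

lemma qa_ne_zero {q : ℂ} (hq : ‖q‖ < 1) (d : ℕ) : qa q d ≠ 0 := by
  apply Finset.prod_ne_zero_iff.2
  intro r _
  intro h
  have h1 : q ^ (r + 1) = 1 := by linear_combination -h
  have : ‖q ^ (r + 1)‖ < 1 := by
    rw [norm_pow]
    exact pow_lt_one₀ (norm_nonneg _) hq (Nat.succ_ne_zero r)
  rw [h1, norm_one] at this
  exact lt_irrefl _ this

lemma log_summable {q x : ℂ} (hq : ‖q‖ < 1) (hx : ‖x‖ < 1) :
    Summable fun r : ℕ => Complex.log (1 - q ^ r * x) := by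
  have hgeo : Summable fun r : ℕ => (3/2 : ℝ) * (‖q‖ ^ r * ‖x‖) := by
    exact ((summable_geometric_of_lt_one (norm_nonneg q) hq).mul_right ‖x‖).mul_left _
  apply Summable.of_norm_bounded_eventually hgeo
  rw [Nat.cofinite_eq_atTop]
  have h0 : Tendsto (fun r : ℕ => ‖q‖ ^ r * ‖x‖) atTop (𝓝 (0 * ‖x‖)) :=
    (tendsto_pow_atTop_nhds_zero_of_lt_one (norm_nonneg q) hq).mul_const _
  rw [zero_mul] at h0
  filter_upwards [h0.eventually_le_const (by norm_num : (0:ℝ) < 1/2)] with r hr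
  have hz : ‖-(q ^ r * x)‖ ≤ 1/2 := by
    rw [norm_neg, norm_mul, norm_pow]; exact hr
  have := Complex.norm_log_one_add_half_le_self hz
  rw [norm_neg, norm_mul, norm_pow] at this
  simpa [sub_eq_add_neg] using this

lemma factor_ne_zero {q x : ℂ} (hq : ‖q‖ < 1) (hx : ‖x‖ < 1) (r : ℕ) :
    (1 - q ^ r * x) ≠ 0 := by
  intro h
  have h1 : q ^ r * x = 1 := by linear_combination -h
  have : ‖q ^ r * x‖ < 1 := by
    rw [norm_mul, norm_pow]
    calc ‖q‖ ^ r * ‖x‖ ≤ 1 * ‖x‖ := by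
          apply mul_le_mul_of_nonneg_right (pow_le_one₀ (norm_nonneg q) hq.le) (norm_nonneg x)
      _ < 1 := by rwa [one_mul]
  rw [h1, norm_one] at this
  exact lt_irrefl _ this

lemma hasProdC {q x : ℂ} (hq : ‖q‖ < 1) (hx : ‖x‖ < 1) :
    HasProd (fun r : ℕ => 1 - q ^ r * x) (∏' r : ℕ, (1 - q ^ r * x)) :=
  (Complex.multipliable_of_summable_log (log_summable hq hx)).hasProd

lemma tprodC_ne_zero {q x : ℂ} (hq : ‖q‖ < 1) (hx : ‖x‖ < 1) :
    (∏' r : ℕ, (1 - q ^ r * x)) ≠ 0 := by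
  have : Complex.exp (∑' r : ℕ, Complex.log (1 - q ^ r * x)) = ∏' r : ℕ, (1 - q ^ r * x) :=
    Complex.cexp_tsum_eq_tprod (fun r => factor_ne_zero hq hx r) (log_summable hq hx)
  rw [← this]
  exact Complex.exp_ne_zero _

lemma exists_lb {q : ℂ} (hq : ‖q‖ < 1) :
    ∃ c : ℝ, 0 < c ∧ ∀ d : ℕ, c ≤ ‖qa q d‖ := by
  set t : ℝ := ‖q‖ with ht
  have ht0 : 0 ≤ t := norm_nonneg q
  have ht1 : t < 1 := hq
  have hpos : ∀ r : ℕ, 0 < 1 - t ^ (r + 1) := fun r => by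
    have : t ^ (r + 1) < 1 := pow_lt_one₀ ht0 ht1 (Nat.succ_ne_zero r)
    linarith
  -- summability of real logs
  have hsumC : Summable fun r : ℕ => Complex.log (1 - (t : ℂ) ^ r * (t : ℂ)) := by
    have : ‖(t : ℂ)‖ < 1 := by
      rw [Complex.norm_real, Real.norm_of_nonneg ht0]; exact ht1
    exact log_summable this this
  have hkey : ∀ r : ℕ, (1 : ℂ) - (t : ℂ) ^ r * (t : ℂ) = ((1 - t ^ (r + 1) : ℝ) : ℂ) := by
    intro r; push_cast; ring
  have hsumR : Summable fun r : ℕ => Real.log (1 - t ^ (r + 1)) := by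
    rw [← Complex.summable_ofReal]
    apply hsumC.congr
    intro r
    rw [hkey r, ← Complex.ofReal_log (hpos r).le]
  have hHP : HasProd (fun r : ℕ => 1 - t ^ (r + 1)) (∏' r : ℕ, (1 - t ^ (r + 1))) :=
    (Real.multipliable_of_summable_log (fun r => hpos r) hsumR).hasProd
  set c : ℝ := ∏' r : ℕ, (1 - t ^ (r + 1)) with hc
  have hc0 : 0 < c := by
    have : Real.exp (∑' r : ℕ, Real.log (1 - t ^ (r + 1))) = ∏' r : ℕ, (1 - t ^ (r + 1)) :=
      Real.rexp_tsum_eq_tprod (fun r => hpos r) hsumR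
    rw [hc, ← this]
    exact Real.exp_pos _
  refine ⟨c, hc0, fun d => ?_⟩
  -- partial products are antitone and tend to c
  have hanti : Antitone fun d : ℕ => ∏ r ∈ Finset.range d, (1 - t ^ (r + 1)) := by
    apply antitone_nat_of_succ_le
    intro n
    rw [Finset.prod_range_succ]
    have h1 : ∏ r ∈ Finset.range n, (1 - t ^ (r + 1)) ≥ 0 :=
      Finset.prod_nonneg fun r _ => (hpos r).le
    nlinarith [hpos n, pow_nonneg ht0 (n + 1)]
  have hle : c ≤ ∏ r ∈ Finset.range d, (1 - t ^ (r + 1)) := by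
    apply le_of_tendsto hHP.tendsto_prod_nat
    filter_upwards [eventually_ge_atTop d] with n hn
    exact hanti hn
  refine hle.trans ?_
  rw [qa, norm_prod]
  apply Finset.prod_le_prod (fun r _ => (hpos r).le)
  intro r _
  have := norm_sub_norm_le (1 : ℂ) (q ^ (r + 1))
  rwa [norm_one, norm_pow] at this

lemma series_summable_norm {q : ℂ} (hq : ‖q‖ < 1) {x : ℂ} (hx : ‖x‖ < 1)
    {c : ℝ} (hc0 : 0 < c) (hcb : ∀ d : ℕ, c ≤ ‖qa q d‖) :
    Summable fun d : ℕ => ‖x ^ d / qa q d‖ := by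
  have hgs : Summable fun d : ℕ => c⁻¹ * ‖x‖ ^ d :=
    (summable_geometric_of_lt_one (norm_nonneg x) hx).mul_left _
  refine Summable.of_nonneg_of_le (fun d => norm_nonneg _) (fun d => ?_) hgs
  rw [norm_div, norm_pow]
  calc ‖x‖ ^ d / ‖qa q d‖ ≤ ‖x‖ ^ d / c :=
        div_le_div_of_nonneg_left (pow_nonneg (norm_nonneg x) d) hc0 (hcb d)
    _ = c⁻¹ * ‖x‖ ^ d := by rw [div_eq_inv_mul]

noncomputable def Sfun (q x : ℂ) : ℂ := ∑' d : ℕ, x ^ d / qa q d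

lemma one_sub_pow_succ_ne_zero {q : ℂ} (hq : ‖q‖ < 1) (d : ℕ) :
    (1 : ℂ) - q ^ (d + 1) ≠ 0 := by
  have := factor_ne_zero hq hq d
  rwa [← pow_succ] at this

lemma Sfun_funEq {q : ℂ} (hq : ‖q‖ < 1) {x : ℂ} (hx : ‖x‖ < 1)
    {c : ℝ} (hc0 : 0 < c) (hcb : ∀ d : ℕ, c ≤ ‖qa q d‖) :
    Sfun q (q * x) = (1 - x) * Sfun q x := by
  have hqx : ‖q * x‖ < 1 := by
    rw [norm_mul]
    nlinarith [norm_nonneg q, norm_nonneg x]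
  have hs : Summable fun d : ℕ => x ^ d / qa q d :=
    (series_summable_norm hq hx hc0 hcb).of_norm
  have hs' : Summable fun d : ℕ => (q * x) ^ d / qa q d :=
    (series_summable_norm hq hqx hc0 hcb).of_norm
  have h1 : Sfun q x - Sfun q (q * x)
      = ∑' d : ℕ, (x ^ d / qa q d - (q * x) ^ d / qa q d) := (hs.tsum_sub hs').symm
  have h2 : ∑' d : ℕ, (x ^ d / qa q d - (q * x) ^ d / qa q d) = x * Sfun q x := by
    rw [(hs.sub hs').tsum_eq_zero_add]
    have h0 : x ^ 0 / qa q 0 - (q * x) ^ 0 / qa q 0 = 0 := by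
      simp [qa]
    rw [h0, zero_add]
    have h3 : ∀ d : ℕ, x ^ (d + 1) / qa q (d + 1) - (q * x) ^ (d + 1) / qa q (d + 1)
        = x * (x ^ d / qa q d) := by
      intro d
      have hqa : qa q (d + 1) = qa q d * (1 - q ^ (d + 1)) := Finset.prod_range_succ _ _
      rw [hqa, mul_pow]
      field_simp [qa_ne_zero hq d, one_sub_pow_succ_ne_zero hq d]
      ring
    rw [tsum_congr h3, tsum_mul_left]
    rfl
  rw [← h1] at h2
  linear_combination -h2

lemma Sfun_sub_one_bound {q : ℂ} (hq : ‖q‖ < 1) {x : ℂ} (hx : ‖x‖ < 1)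
    {c : ℝ} (hc0 : 0 < c) (hcb : ∀ d : ℕ, c ≤ ‖qa q d‖) :
    ‖Sfun q x - 1‖ ≤ c⁻¹ * (1 - ‖x‖)⁻¹ * ‖x‖ := by
  have hs : Summable fun d : ℕ => x ^ d / qa q d :=
    (series_summable_norm hq hx hc0 hcb).of_norm
  have h1 : Sfun q x = x ^ 0 / qa q 0 + ∑' d : ℕ, x ^ (d + 1) / qa q (d + 1) :=
    hs.tsum_eq_zero_add
  have h0 : x ^ 0 / qa q 0 = 1 := by simp [qa]
  have hsub : Sfun q x - 1 = ∑' d : ℕ, x ^ (d + 1) / qa q (d + 1) := by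
    rw [h1, h0]; ring
  rw [hsub]
  have hsn : Summable fun d : ℕ => ‖x ^ (d + 1) / qa q (d + 1)‖ :=
    (summable_nat_add_iff 1).2 (series_summable_norm hq hx hc0 hcb)
  have hgs : Summable fun d : ℕ => c⁻¹ * ‖x‖ * ‖x‖ ^ d :=
    (summable_geometric_of_lt_one (norm_nonneg x) hx).mul_left _
  calc ‖∑' d : ℕ, x ^ (d + 1) / qa q (d + 1)‖
      ≤ ∑' d : ℕ, ‖x ^ (d + 1) / qa q (d + 1)‖ := norm_tsum_le_tsum_norm hsn
    _ ≤ ∑' d : ℕ, c⁻¹ * ‖x‖ * ‖x‖ ^ d := by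
        apply Summable.tsum_le_tsum _ hsn hgs
        intro d
        rw [norm_div, norm_pow]
        calc ‖x‖ ^ (d + 1) / ‖qa q (d + 1)‖ ≤ ‖x‖ ^ (d + 1) / c :=
              div_le_div_of_nonneg_left (pow_nonneg (norm_nonneg x) _) hc0 (hcb _)
          _ = c⁻¹ * ‖x‖ * ‖x‖ ^ d := by rw [pow_succ]; ring
    _ = c⁻¹ * (1 - ‖x‖)⁻¹ * ‖x‖ := by
        rw [tsum_mul_left, tsum_geometric_of_lt_one (norm_nonneg x) hx]; ring


/-- For `|q| < 1` and `|Q| < 1`: the series `∑_{d≥0} Q^d/(q;q)_d` converges absolutely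
(its finite q-Pochhammer denominators `(q;q)_d = ∏_{r=1}^d (1-q^r)` being nonzero), the
infinite product `(Q;q)_∞ = ∏_{r≥0} (1-q^r Q)` is nonzero, and
`∑_{d≥0} Q^d/(q;q)_d = 1/(Q;q)_∞`. -/
theorem stmt5 (q Q : ℂ) (hq : ‖q‖ < 1) (hQ : ‖Q‖ < 1) :
    (∀ d : ℕ, (∏ r ∈ Finset.range d, (1 - q ^ (r + 1))) ≠ 0) ∧
      Summable (fun d : ℕ => ‖Q ^ d / ∏ r ∈ Finset.range d, (1 - q ^ (r + 1))‖) ∧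
      (∏' r : ℕ, (1 - q ^ r * Q)) ≠ 0 ∧
      (∑' d : ℕ, Q ^ d / ∏ r ∈ Finset.range d, (1 - q ^ (r + 1)))
        = (∏' r : ℕ, (1 - q ^ r * Q))⁻¹ := by
  obtain ⟨c, hc0, hcb⟩ := exists_lb hq
  refine ⟨fun d => qa_ne_zero hq d, series_summable_norm hq hQ hc0 hcb,
    tprodC_ne_zero hq hQ, ?_⟩
  have habs : ∀ n : ℕ, ‖q ^ n * Q‖ < 1 := by
    intro n
    rw [norm_mul, norm_pow]
    calc ‖q‖ ^ n * ‖Q‖ ≤ 1 * ‖Q‖ := by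
          apply mul_le_mul_of_nonneg_right (pow_le_one₀ (norm_nonneg q) hq.le)
            (norm_nonneg Q)
      _ < 1 := by rwa [one_mul]
  have hind : ∀ n : ℕ, Sfun q Q * ∏ r ∈ Finset.range n, (1 - q ^ r * Q)
      = Sfun q (q ^ n * Q) := by
    intro n
    induction n with
    | zero => simp
    | succ n ih =>
      have heq : q ^ (n + 1) * Q = q * (q ^ n * Q) := by ring
      rw [Finset.prod_range_succ, ← mul_assoc, ih, heq,
        Sfun_funEq hq (habs n) hc0 hcb, mul_comm]
  have hT1 : Filter.Tendsto (fun n : ℕ => Sfun q Q * ∏ r ∈ Finset.range n, (1 - q ^ r * Q))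
      Filter.atTop (𝓝 (Sfun q Q * ∏' r : ℕ, (1 - q ^ r * Q))) :=
    ((hasProdC hq hQ).tendsto_prod_nat).const_mul _
  have hT2 : Filter.Tendsto (fun n : ℕ => Sfun q (q ^ n * Q)) Filter.atTop (𝓝 1) := by
    rw [tendsto_iff_norm_sub_tendsto_zero]
    apply squeeze_zero (fun n => norm_nonneg _)
      (g := fun n => (c⁻¹ * (1 - ‖Q‖)⁻¹ * ‖Q‖) * ‖q‖ ^ n)
    · intro n
      calc ‖Sfun q (q ^ n * Q) - 1‖ ≤ c⁻¹ * (1 - ‖q ^ n * Q‖)⁻¹ * ‖q ^ n * Q‖ :=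
            Sfun_sub_one_bound hq (habs n) hc0 hcb
        _ ≤ (c⁻¹ * (1 - ‖Q‖)⁻¹ * ‖Q‖) * ‖q‖ ^ n := by
            rw [norm_mul, norm_pow]
            have hqn : ‖q‖ < 1 := hq
            have hQn : ‖Q‖ < 1 := hQ
            have hle : ‖q‖ ^ n * ‖Q‖ ≤ ‖Q‖ := by
              calc ‖q‖ ^ n * ‖Q‖ ≤ 1 * ‖Q‖ :=
                    mul_le_mul_of_nonneg_right (pow_le_one₀ (norm_nonneg q) hq.le)
                      (norm_nonneg Q)
                _ = ‖Q‖ := one_mul _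
            have h3 : (0:ℝ) < 1 - ‖Q‖ := by linarith
            have h4 : (1:ℝ) - ‖Q‖ ≤ 1 - ‖q‖ ^ n * ‖Q‖ := by linarith
            have hinv : (1 - ‖q‖ ^ n * ‖Q‖)⁻¹ ≤ (1 - ‖Q‖)⁻¹ := inv_anti₀ h3 h4
            have h1 : (0:ℝ) ≤ c⁻¹ := (inv_pos.2 hc0).le
            calc c⁻¹ * (1 - ‖q‖ ^ n * ‖Q‖)⁻¹ * (‖q‖ ^ n * ‖Q‖)
                ≤ c⁻¹ * (1 - ‖Q‖)⁻¹ * (‖q‖ ^ n * ‖Q‖) := by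
                  apply mul_le_mul_of_nonneg_right
                    (mul_le_mul_of_nonneg_left hinv h1) (by positivity)
              _ = c⁻¹ * (1 - ‖Q‖)⁻¹ * ‖Q‖ * ‖q‖ ^ n := by ring
    · have := (tendsto_pow_atTop_nhds_zero_of_lt_one (norm_nonneg q) hq).const_mul
        (c⁻¹ * (1 - ‖Q‖)⁻¹ * ‖Q‖)
      simpa using this
  have hmain : Sfun q Q * (∏' r : ℕ, (1 - q ^ r * Q)) = 1 :=
    tendsto_nhds_unique (hT1.congr hind) hT2
  show Sfun q Q = _
  exact eq_inv_of_mul_eq_one_left (by linear_combination hmain)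
end

section
/- Let L be a field, let σ : L → L be a field automorphism, and let C = {a ∈ L : σ(a) = a} be its fixed field. Let n ≥ 1 and let A be an invertible n×n matrix over L. Then the set of solutions Sol = {X ∈ Lⁿ : σ(X) = A·X} (σ being applied entrywise to the vector X) is a C-vector subspace of Lⁿ of dimension at most n; equivalently, any n+1 solutions X₁, …, X_{n+1} ∈ Sol are linearly dependent over C. -/
/-- Let `L` be a field with automorphism `σ`, `C` its fixed field, and
`A ∈ GLₙ(L)`. The solution space `{X : σ(X) = A·X}` of the difference system is a
`C`-vector space of dimension at most `n`: any `n+1` solutions are linearly dependent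
over `C`, i.e. there are coefficients `c k` fixed by `σ`, not all zero, with
`∑ k, c k • X k = 0`. -/
theorem stmt7 {L : Type*} [Field L] (σ : L ≃+* L) (n : ℕ) (hn : 1 ≤ n)
    (A : Matrix (Fin n) (Fin n) L) (hA : IsUnit A.det)
    (X : Fin (n + 1) → (Fin n → L))
    (hX : ∀ k, (fun i => σ (X k i)) = A.mulVec (X k)) :
    ∃ c : Fin (n + 1) → L, (∀ k, σ (c k) = c k) ∧ c ≠ 0 ∧ ∑ k, c k • X k = 0 := by
  classical
  have hinj : ∀ v : Fin n → L, A.mulVec v = 0 → v = 0 := by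
    intro v hv
    have h1 : A⁻¹.mulVec (A.mulVec v) = v := by
      rw [Matrix.mulVec_mulVec, Matrix.nonsing_inv_mul A hA, Matrix.one_mulVec]
    rw [hv, Matrix.mulVec_zero] at h1
    exact h1.symm
  have hdep : ¬ LinearIndependent L X := by
    intro h
    have h2 := h.fintype_card_le_finrank
    simp [Module.finrank_fin_fun] at h2
  obtain ⟨g, hg0, i0, hi0⟩ := Fintype.not_linearIndependent_iff.mp hdep
  set P : ℕ → Prop := fun m => ∃ c : Fin (n+1) → L, (∑ k, c k • X k = 0) ∧ c ≠ 0 ∧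
      (Finset.univ.filter fun k => c k ≠ 0).card = m with hP
  have hPex : ∃ m, P m := ⟨_, g, hg0, fun h => hi0 (congrFun h i0), rfl⟩
  obtain ⟨c, hc0, hcne, hccard⟩ := Nat.find_spec hPex
  obtain ⟨k0, hk0⟩ : ∃ k, c k ≠ 0 := by
    by_contra h; push_neg at h; exact hcne (funext fun k => h k)
  set c' : Fin (n+1) → L := fun k => (c k0)⁻¹ * c k with hc'
  have hc'0 : ∑ k, c' k • X k = 0 := by
    have h3 : ∑ k, c' k • X k = (c k0)⁻¹ • ∑ k, c k • X k := by
      rw [Finset.smul_sum]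
      refine Finset.sum_congr rfl fun k _ => ?_
      simp [hc', smul_smul]
    rw [h3, hc0, smul_zero]
  have hc'k0 : c' k0 = 1 := inv_mul_cancel₀ hk0
  have hsupp : ∀ k, c' k = 0 ↔ c k = 0 := by
    intro k
    simp [hc', inv_eq_zero, mul_eq_zero, hk0]
  -- apply σ to the relation
  have hσrel : ∑ k, σ (c' k) • X k = 0 := by
    apply hinj
    have h4 : A.mulVec (∑ k, σ (c' k) • X k) = ∑ k, σ (c' k) • A.mulVec (X k) := by
      simp_rw [← Matrix.mulVecLin_apply, map_sum, map_smul]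
    rw [h4]
    funext i
    have h5 : ∀ k, A.mulVec (X k) i = σ (X k i) := fun k => (congrFun (hX k) i).symm
    have h6 : σ (∑ k, c' k * X k i) = 0 := by
      have := congrFun hc'0 i
      simp only [Finset.sum_apply, Pi.smul_apply, smul_eq_mul, Pi.zero_apply] at this
      rw [this, map_zero]
    rw [map_sum] at h6
    simp only [map_mul] at h6
    simpa [Finset.sum_apply, Pi.smul_apply, smul_eq_mul, h5] using h6
  set d : Fin (n+1) → L := fun k => σ (c' k) - c' k with hd
  have hd0 : ∑ k, d k • X k = 0 := by
    simp only [hd, sub_smul]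
    rw [Finset.sum_sub_distrib, hσrel, hc'0, sub_zero]
  have hdzero : d = 0 := by
    by_contra hdne
    have hsub : (Finset.univ.filter fun k => d k ≠ 0) ⊂
        (Finset.univ.filter fun k => c k ≠ 0) := by
      constructor
      · intro k hk
        simp only [Finset.mem_filter, Finset.mem_univ, true_and] at hk ⊢
        intro hck
        apply hk
        have : c' k = 0 := (hsupp k).mpr hck
        simp [hd, this]
      · intro hsub'
        have hk0mem : k0 ∈ Finset.univ.filter fun k => c k ≠ 0 := by
          simp [hk0]
        have := hsub' hk0mem
        simp only [Finset.mem_filter, Finset.mem_univ, true_and] at this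
        apply this
        simp [hd, hc'k0]
    have hlt : (Finset.univ.filter fun k => d k ≠ 0).card < Nat.find hPex := by
      rw [← hccard]
      exact Finset.card_lt_card hsub
    exact Nat.find_min hPex hlt ⟨d, hd0, hdne, rfl⟩
  refine ⟨c', fun k => ?_, ?_, hc'0⟩
  · have := congrFun hdzero k
    simpa [hd, sub_eq_zero] using this
  · intro h
    have := congrFun h k0
    rw [hc'k0] at this
    exact one_ne_zero this
end

section
/- Let N ∈ ℕ and let R be a commutative ring containing units q and p such that (1 - p⁻¹)^{N+1} = 0 and such that 1 - q^r p⁻¹ is a unit of R for every integer r ≥ 1. In R⟦Q⟧, define Givental's K-theoretic J-function J = Σ_{d≥0} (∏_{r=1}^{d} (1 - q^r p⁻¹))^{-(N+1)} · Q^d. Then ((1 - p⁻¹·σ_q)^{N+1}) J = Q·J, where (1 - p⁻¹σ_q) is the R-linear operator on R⟦Q⟧ sending f to f - p⁻¹·σ_q(f). -/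
private lemma iter_coeff {R : Type*} [CommRing R] (q pinv : R) (n : ℕ) (f : PowerSeries R)
    (d : ℕ) :
    PowerSeries.coeff d
      ((fun f : PowerSeries R => f - PowerSeries.C pinv * PowerSeries.rescale q f)^[n] f)
      = (1 - q ^ d * pinv) ^ n * PowerSeries.coeff d f := by
  induction n with
  | zero => simp
  | succ n ih =>
    rw [Function.iterate_succ_apply', map_sub, PowerSeries.coeff_C_mul,
      PowerSeries.coeff_rescale, ih, pow_succ]
    ring

/-- Givental's K-theoretic J-function of `ℙ^N` satisfies its q-difference equation:
in a commutative ring `R` with units `q` and `p` such that `(1-p⁻¹)^{N+1} = 0` and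
`1 - q^r p⁻¹` is a unit for every `r ≥ 1`, the power series
`J = ∑_{d≥0} (∏_{r=1}^d (1-q^r p⁻¹))^{-(N+1)} Q^d` satisfies
`(1 - p⁻¹ σ_q)^{N+1} J = Q·J`, where `σ_q` is the substitution `Q ↦ qQ`
(`PowerSeries.rescale q`). -/
theorem stmt9 {R : Type*} [CommRing R] (N : ℕ) (q p pinv : R)
    (hq : IsUnit q) (hp : p * pinv = 1)
    (hnil : (1 - pinv) ^ (N + 1) = 0)
    (hu : ∀ r : ℕ, 1 ≤ r → IsUnit (1 - q ^ r * pinv)) :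
    (fun f : PowerSeries R => f - PowerSeries.C pinv * PowerSeries.rescale q f)^[N + 1]
        (PowerSeries.mk fun d =>
          Ring.inverse ((∏ r ∈ Finset.range d, (1 - q ^ (r + 1) * pinv)) ^ (N + 1)))
      = PowerSeries.X *
          PowerSeries.mk fun d =>
            Ring.inverse ((∏ r ∈ Finset.range d, (1 - q ^ (r + 1) * pinv)) ^ (N + 1)) := by
  ext d
  rw [iter_coeff]
  cases d with
  | zero => simp [hnil]
  | succ e =>
    rw [PowerSeries.coeff_succ_X_mul, PowerSeries.coeff_mk, PowerSeries.coeff_mk,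
      Finset.prod_range_succ, mul_pow, Ring.mul_inverse_rev, ← mul_assoc,
      Ring.mul_inverse_cancel _ (((hu (e + 1) (by omega))).pow _), one_mul]
end

section
/- Let K be a field, let q ∈ K be a unit, and let a₁,…,a_r, b₁,…,b_s ∈ K be such that 1 - q^d ≠ 0 and 1 - b_j q^{d-1} ≠ 0 for every integer d ≥ 1 and every j. Define the q-hypergeometric series φ ∈ K⟦Q⟧ by φ = Σ_{d≥0} [ ((a₁;q)_d ⋯ (a_r;q)_d) / ((q;q)_d (b₁;q)_d ⋯ (b_s;q)_d) ] · ((-1)^d q^{d(d-1)/2})^{1+s-r} · Q^d. Then φ satisfies the q-hypergeometric equation [ Q·(-σ_q)^{1+s-r} ∘ ∏_{i=1}^{r}(1 - a_i σ_q) − (1 - σ_q) ∘ ∏_{j=1}^{s}(1 - (b_j/q)·σ_q) ] φ = 0, where (-σ_q)^{1+s-r} denotes the (possibly negative) integer power of the automorphism -σ_q of K⟦Q⟧. -/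
open PowerSeries

noncomputable def qShift (K : Type*) [CommRing K] (q : K) :
    Module.End K (PowerSeries K) where
  toFun := PowerSeries.rescale q
  map_add' f g := map_add _ f g
  map_smul' c f := by
    ext n
    simp only [PowerSeries.coeff_rescale, map_smul, RingHom.id_apply, smul_eq_mul]
    ring

section aux
variable {K : Type*} [Field K]

def IsDiag (D : Module.End K (PowerSeries K)) (lam : ℕ → K) : Prop :=
  ∀ (f : PowerSeries K) (n : ℕ),
    PowerSeries.coeff n (D f) = lam n * PowerSeries.coeff n f

lemma isDiag_one : IsDiag (1 : Module.End K (PowerSeries K)) (fun _ => 1) := by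
  intro f n; simp

lemma IsDiag.mul {D E : Module.End K (PowerSeries K)} {lam mu : ℕ → K}
    (hD : IsDiag D lam) (hE : IsDiag E mu) :
    IsDiag (D * E) (fun n => lam n * mu n) := by
  intro f n
  rw [Module.End.mul_apply, hD, hE]; ring

lemma IsDiag.sub {D E : Module.End K (PowerSeries K)} {lam mu : ℕ → K}
    (hD : IsDiag D lam) (hE : IsDiag E mu) :
    IsDiag (D - E) (fun n => lam n - mu n) := by
  intro f n
  rw [LinearMap.sub_apply, map_sub, hD, hE]; ring

lemma isDiag_qShift (q : K) : IsDiag (qShift K q) (fun n => q ^ n) :=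
  fun f n => PowerSeries.coeff_rescale f q n

lemma isDiag_C (c : K) :
    IsDiag (LinearMap.mulLeft K (PowerSeries.C (R := K) c)) (fun _ => c) := by
  intro f n
  simp [LinearMap.mulLeft_apply]

lemma isDiag_listProd {k : ℕ} (D : Fin k → Module.End K (PowerSeries K))
    (lam : Fin k → ℕ → K) (h : ∀ i, IsDiag (D i) (lam i)) :
    IsDiag (List.ofFn D).prod (fun n => ∏ i, lam i n) := by
  induction k with
  | zero =>
      intro f n; simp
  | succ k ih =>
      rw [List.ofFn_succ, List.prod_cons]
      intro f n
      rw [(h 0).mul (ih (fun i => D i.succ) (fun i => lam i.succ) (fun i => h i.succ)) f n,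
        ]
      simp only []
      rw [Fin.prod_univ_succ]
end aux

noncomputable def negQShift (K : Type*) [CommRing K] (q : Kˣ) :
    (Module.End K (PowerSeries K))ˣ where
  val := -qShift K (q : K)
  inv := -qShift K ((q⁻¹ : Kˣ) : K)
  val_inv := by
    apply LinearMap.ext
    intro f
    rw [Module.End.mul_apply, LinearMap.neg_apply, LinearMap.neg_apply, map_neg, neg_neg,
      Module.End.one_apply]
    show PowerSeries.rescale (q : K) (PowerSeries.rescale ((q⁻¹ : Kˣ) : K) f) = f
    rw [PowerSeries.rescale_rescale, Units.inv_mul, PowerSeries.rescale_one, RingHom.id_apply]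
  inv_val := by
    apply LinearMap.ext
    intro f
    rw [Module.End.mul_apply, LinearMap.neg_apply, LinearMap.neg_apply, map_neg, neg_neg,
      Module.End.one_apply]
    show PowerSeries.rescale ((q⁻¹ : Kˣ) : K) (PowerSeries.rescale (q : K) f) = f
    rw [PowerSeries.rescale_rescale, Units.mul_inv, PowerSeries.rescale_one, RingHom.id_apply]

section aux2
variable {K : Type*} [Field K]

lemma isDiag_negQShift_zpow (q : Kˣ) (m : ℤ) :
    IsDiag (((negQShift K q ^ m : (Module.End K (PowerSeries K))ˣ) :
      Module.End K (PowerSeries K))) (fun n => (-(q : K) ^ n) ^ m) := by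
  have hne : ∀ n : ℕ, (-(q : K) ^ n) ≠ 0 := fun n =>
    neg_ne_zero.mpr (pow_ne_zero _ q.ne_zero)
  have hbase : IsDiag ((negQShift K q : (Module.End K (PowerSeries K))ˣ) :
      Module.End K (PowerSeries K)) (fun n => -(q : K) ^ n) := by
    intro f n
    show PowerSeries.coeff n ((-qShift K (q : K)) f) = _
    rw [LinearMap.neg_apply, map_neg, isDiag_qShift (q : K) f n]
    ring
  have hinv : IsDiag (((negQShift K q)⁻¹ : (Module.End K (PowerSeries K))ˣ) :
      Module.End K (PowerSeries K)) (fun n => (-(q : K) ^ n)⁻¹) := by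
    intro f n
    show PowerSeries.coeff n ((-qShift K ((q⁻¹ : Kˣ) : K)) f) = _
    rw [LinearMap.neg_apply, map_neg, isDiag_qShift ((q⁻¹ : Kˣ) : K) f n]
    field_simp
    rw [Units.val_inv_eq_inv_val, inv_pow, mul_comm _ ((q:K)^n), ← mul_assoc,
      mul_inv_cancel₀ (pow_ne_zero _ q.ne_zero), one_mul]
  induction m using Int.induction_on with
  | zero => intro f n; simp
  | succ i ihi =>
      intro f n
      rw [show (negQShift K q ^ ((i : ℤ) + 1) : (Module.End K (PowerSeries K))ˣ)
          = negQShift K q ^ (i : ℤ) * negQShift K q from zpow_add_one _ _,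
        Units.val_mul, (ihi.mul hbase) f n]
      simp only []
      rw [← zpow_add_one₀ (hne n)]
  | pred i ihi =>
      intro f n
      rw [show (negQShift K q ^ (-(i : ℤ) - 1) : (Module.End K (PowerSeries K))ˣ)
          = negQShift K q ^ (-(i : ℤ)) * (negQShift K q)⁻¹ from zpow_sub_one _ _,
        Units.val_mul, (ihi.mul hinv) f n]
      simp only []
      rw [← zpow_sub_one₀ (hne n)]
end aux2

theorem stmt11_aux {K : Type*} [Field K] (q : Kˣ) (r s : ℕ) (a : Fin r → K) (b : Fin s → K)
    (hq : ∀ d : ℕ, 1 ≤ d → (1 : K) - (q : K) ^ d ≠ 0)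
    (hb : ∀ (j : Fin s) (t : ℕ), (1 : K) - b j * (q : K) ^ t ≠ 0) :
    (LinearMap.mulLeft K (PowerSeries.X : PowerSeries K) *
          ((negQShift K q ^ ((1 : ℤ) + s - r) : (Module.End K (PowerSeries K))ˣ) :
            Module.End K (PowerSeries K)) *
          (List.ofFn fun i : Fin r =>
            1 - LinearMap.mulLeft K (PowerSeries.C (R := K) (a i)) * qShift K (q : K)).prod -
        (1 - qShift K (q : K)) *
          (List.ofFn fun j : Fin s =>
            1 - LinearMap.mulLeft K (PowerSeries.C (R := K) (b j / (q : K))) * qShift K (q : K)).prod)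
      (PowerSeries.mk fun d =>
        ((∏ i, ∏ t ∈ Finset.range d, (1 - (q : K) ^ t * a i)) /
            ((∏ t ∈ Finset.range d, (1 - (q : K) ^ (t + 1))) *
              ∏ j, ∏ t ∈ Finset.range d, (1 - (q : K) ^ t * b j))) *
          (((-1 : K) ^ d * (q : K) ^ (d * (d - 1) / 2)) ^ ((1 : ℤ) + s - r))) = 0 := by
  set m : ℤ := (1 : ℤ) + s - r with hm
  set A : ℕ → K := fun d =>
    ((∏ i, ∏ t ∈ Finset.range d, (1 - (q : K) ^ t * a i)) /
        ((∏ t ∈ Finset.range d, (1 - (q : K) ^ (t + 1))) *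
          ∏ j, ∏ t ∈ Finset.range d, (1 - (q : K) ^ t * b j))) *
      (((-1 : K) ^ d * (q : K) ^ (d * (d - 1) / 2)) ^ m) with hA
  have hPa : IsDiag (List.ofFn fun i : Fin r =>
      1 - LinearMap.mulLeft K (PowerSeries.C (R := K) (a i)) * qShift K (q : K)).prod
      (fun n => ∏ i, (1 - a i * (q : K) ^ n)) :=
    isDiag_listProd _ _ (fun i => isDiag_one.sub ((isDiag_C (a i)).mul (isDiag_qShift _)))
  have hPb : IsDiag (List.ofFn fun j : Fin s =>
      1 - LinearMap.mulLeft K (PowerSeries.C (R := K) (b j / (q : K))) * qShift K (q : K)).prod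
      (fun n => ∏ j, (1 - b j / (q : K) * (q : K) ^ n)) :=
    isDiag_listProd _ _ (fun j => isDiag_one.sub ((isDiag_C _).mul (isDiag_qShift _)))
  have hU := isDiag_negQShift_zpow q m
  have hS : IsDiag (1 - qShift K (q : K)) (fun n => 1 - (q : K) ^ n) :=
    isDiag_one.sub (isDiag_qShift _)
  ext n
  rw [map_zero, LinearMap.sub_apply, map_sub, Module.End.mul_apply, Module.End.mul_apply,
    Module.End.mul_apply, LinearMap.mulLeft_apply, hS, hPb, PowerSeries.coeff_mk]
  cases n with
  | zero =>
      simp [PowerSeries.coeff_zero_eq_constantCoeff]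
  | succ d =>
      rw [PowerSeries.coeff_succ_X_mul, hU, hPa, PowerSeries.coeff_mk]
      simp only [hA]
      have hq0 : (q:K) ≠ 0 := q.ne_zero
      have hbb : (∏ j, (1 - b j / (q:K) * (q:K)^(d+1))) = ∏ j, (1 - (q:K)^d * b j) := by
        refine Finset.prod_congr rfl fun j _ => ?_
        rw [pow_succ]
        field_simp
      have hPa' : (∏ i, (1 - a i * (q:K)^d)) = ∏ i, (1 - (q:K)^d * a i) :=
        Finset.prod_congr rfl fun i _ => by ring
      have hNa : (∏ i, ∏ t ∈ Finset.range (d+1), (1 - (q:K)^t * a i))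
          = (∏ i, ∏ t ∈ Finset.range d, (1 - (q:K)^t * a i)) * ∏ i, (1 - (q:K)^d * a i) := by
        rw [← Finset.prod_mul_distrib]
        exact Finset.prod_congr rfl fun i _ => Finset.prod_range_succ _ _
      have hDq : (∏ t ∈ Finset.range (d+1), (1 - (q:K)^(t+1)))
          = (∏ t ∈ Finset.range d, (1 - (q:K)^(t+1))) * (1 - (q:K)^(d+1)) :=
        Finset.prod_range_succ _ _
      have hDb : (∏ j, ∏ t ∈ Finset.range (d+1), (1 - (q:K)^t * b j))
          = (∏ j, ∏ t ∈ Finset.range d, (1 - (q:K)^t * b j)) * ∏ j, (1 - (q:K)^d * b j) := by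
        rw [← Finset.prod_mul_distrib]
        exact Finset.prod_congr rfl fun j _ => Finset.prod_range_succ _ _
      have harith : (d+1) * ((d+1) - 1) / 2 = d * (d - 1) / 2 + d := by
        rw [← Finset.sum_range_id, ← Finset.sum_range_id, Finset.sum_range_succ]
      have hc : (((-1:K)^(d+1) * (q:K)^((d+1) * ((d+1) - 1) / 2)) ^ m)
          = (((-1:K)^d * (q:K)^(d * (d-1) / 2)) ^ m) * ((-(q:K)^d) ^ m) := by
        rw [← mul_zpow]
        congr 1
        rw [harith, pow_add, pow_succ]
        ring
      have hDq0 : (∏ t ∈ Finset.range d, (1 - (q:K)^(t+1))) ≠ 0 :=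
        Finset.prod_ne_zero_iff.mpr fun t _ => hq (t+1) t.succ_pos
      have hDb0 : (∏ j, ∏ t ∈ Finset.range d, (1 - (q:K)^t * b j)) ≠ 0 :=
        Finset.prod_ne_zero_iff.mpr fun j _ => Finset.prod_ne_zero_iff.mpr fun t _ => by
          simpa [mul_comm] using hb j t
      have hDb1 : (∏ j, (1 - (q:K)^d * b j)) ≠ 0 :=
        Finset.prod_ne_zero_iff.mpr fun j _ => by simpa [mul_comm] using hb j d
      have hq1 : (1:K) - (q:K)^(d+1) ≠ 0 := hq (d+1) (Nat.succ_pos d)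
      have key : (1 - (q:K)^(d+1)) * (∏ j, (1 - (q:K)^d * b j)) *
          ((∏ i, ∏ t ∈ Finset.range (d+1), (1 - (q:K)^t * a i)) /
            ((∏ t ∈ Finset.range (d+1), (1 - (q:K)^(t+1))) *
              ∏ j, ∏ t ∈ Finset.range (d+1), (1 - (q:K)^t * b j)))
          = (∏ i, (1 - (q:K)^d * a i)) *
            ((∏ i, ∏ t ∈ Finset.range d, (1 - (q:K)^t * a i)) /
              ((∏ t ∈ Finset.range d, (1 - (q:K)^(t+1))) *
                ∏ j, ∏ t ∈ Finset.range d, (1 - (q:K)^t * b j))) := by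
        rw [hNa, hDq, hDb]
        field_simp
      rw [sub_eq_zero, hbb, hPa', hc]
      generalize (((-1:K)^d * (q:K)^(d * (d-1) / 2)) ^ m) = E1
      generalize ((-(q:K)^d) ^ m) = E2
      linear_combination (-(E1 * E2)) * key

/-- The q-hypergeometric series `ᵣφₛ` with parameters `a₁,…,a_r, b₁,…,b_s`
satisfies the q-hypergeometric equation
`[Q·(-σ_q)^{1+s-r} ∘ ∏ᵢ(1 - aᵢσ_q) − (1-σ_q) ∘ ∏ⱼ(1 - (bⱼ/q)σ_q)] φ = 0`. -/
theorem stmt11 {K : Type*} [Field K] (q : Kˣ) (r s : ℕ) (a : Fin r → K) (b : Fin s → K)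
    (hq : ∀ d : ℕ, 1 ≤ d → (1 : K) - (q : K) ^ d ≠ 0)
    (hb : ∀ (j : Fin s) (t : ℕ), (1 : K) - b j * (q : K) ^ t ≠ 0) :
    let σ : Module.End K (PowerSeries K) := qShift K (q : K)
    let φ : PowerSeries K := PowerSeries.mk fun d =>
      ((∏ i, ∏ t ∈ Finset.range d, (1 - (q : K) ^ t * a i)) /
          ((∏ t ∈ Finset.range d, (1 - (q : K) ^ (t + 1))) *
            ∏ j, ∏ t ∈ Finset.range d, (1 - (q : K) ^ t * b j))) *
        (((-1 : K) ^ d * (q : K) ^ (d * (d - 1) / 2)) ^ ((1 : ℤ) + s - r))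
    (LinearMap.mulLeft K (PowerSeries.X : PowerSeries K) *
          ((negQShift K q ^ ((1 : ℤ) + s - r) : (Module.End K (PowerSeries K))ˣ) :
            Module.End K (PowerSeries K)) *
          (List.ofFn fun i : Fin r =>
            1 - LinearMap.mulLeft K (PowerSeries.C (R := K) (a i)) * σ).prod -
        (1 - σ) *
          (List.ofFn fun j : Fin s =>
            1 - LinearMap.mulLeft K (PowerSeries.C (R := K) (b j / (q : K))) * σ).prod) φ = 0 := by
  intro σ φ
  exact stmt11_aux q r s a b hq hb
end

section
/- Let N ∈ ℕ and let R be a commutative ring with units q, p, Λ₀, …, Λ_N ∈ R such that ∏_{i=0}^{N}(1 - Λ_i p⁻¹) = 0 and such that 1 - q^r Λ_i p⁻¹ is a unit of R for every integer r ≥ 1 and every i. Define the equivariant K-theoretic J-function J = Σ_{d≥0} ( ∏_{i=0}^{N} ∏_{r=1}^{d} (1 - q^r Λ_i p⁻¹) )^{-1} · Q^d ∈ R⟦Q⟧. Then ( ∏_{i=0}^{N} (1 - Λ_i p⁻¹·σ_q) ) J = Q·J, where (1 - Λ_i p⁻¹σ_q) is the operator f ↦ f - Λ_i p⁻¹·σ_q(f)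 and the product is composition of these pairwise commuting operators. -/
private lemma foldr_coeff {R : Type*} [CommRing R] (q : R) (l : List R)
    (f : PowerSeries R) (d : ℕ) :
    PowerSeries.coeff d
      ((l.map (fun c => fun g : PowerSeries R =>
          g - PowerSeries.C c * PowerSeries.rescale q g)).foldr (· ∘ ·) id f)
      = (l.map (fun c => 1 - c * q ^ d)).prod * PowerSeries.coeff d f := by
  induction l with
  | nil => simp
  | cons c l ih =>
      simp only [List.map_cons, List.foldr_cons, Function.comp_apply, List.prod_cons,
        map_sub, PowerSeries.coeff_C_mul, PowerSeries.coeff_rescale, ih]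
      ring

/-- The equivariant K-theoretic J-function of `ℙ^N` satisfies its q-difference equation:
in a commutative ring `R` with units `q`, `p`, `Λ₀,…,Λ_N` such that `∏ᵢ(1-Λᵢp⁻¹) = 0` and
`1 - q^r Λᵢ p⁻¹` is a unit for all `r ≥ 1`, the series
`J = ∑_{d≥0} (∏ᵢ∏_{r=1}^d (1 - q^r Λᵢ p⁻¹))⁻¹ Q^d` satisfies
`(∏ᵢ (1 - Λᵢ p⁻¹ σ_q)) J = Q·J`, the product being composition of the pairwise commuting
operators `f ↦ f - Λᵢp⁻¹·σ_q f`. -/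
theorem stmt15 {R : Type*} [CommRing R] (N : ℕ) (q p pinv : R) (Λ : Fin (N + 1) → R)
    (hq : IsUnit q) (hp : p * pinv = 1) (hΛ : ∀ i, IsUnit (Λ i))
    (hrel : ∏ i, (1 - Λ i * pinv) = 0)
    (hu : ∀ (i : Fin (N + 1)) (r : ℕ), 1 ≤ r → IsUnit (1 - q ^ r * Λ i * pinv)) :
    ((List.ofFn fun i : Fin (N + 1) =>
        fun f : PowerSeries R =>
          f - PowerSeries.C (Λ i * pinv) * PowerSeries.rescale q f).foldr (· ∘ ·) id)
        (PowerSeries.mk fun d =>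
          Ring.inverse (∏ i, ∏ r ∈ Finset.range d, (1 - q ^ (r + 1) * Λ i * pinv)))
      = PowerSeries.X *
          PowerSeries.mk fun d =>
            Ring.inverse (∏ i, ∏ r ∈ Finset.range d, (1 - q ^ (r + 1) * Λ i * pinv)) := by
  have hofn : (List.ofFn fun i : Fin (N + 1) =>
        fun f : PowerSeries R =>
          f - PowerSeries.C (Λ i * pinv) * PowerSeries.rescale q f)
      = (List.ofFn fun i => Λ i * pinv).map
          (fun c => fun g : PowerSeries R =>
            g - PowerSeries.C c * PowerSeries.rescale q g) := by
    rw [List.map_ofFn]; rfl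
  rw [hofn]
  ext d
  rw [foldr_coeff, List.map_ofFn, List.prod_ofFn]
  simp only [Function.comp_apply]
  rw [show (∏ i, (1 - Λ i * pinv * q ^ d)) = ∏ i, (1 - q ^ d * Λ i * pinv) from
    Finset.prod_congr rfl fun i _ => by ring, PowerSeries.coeff_mk]
  match d with
  | 0 =>
    simp only [pow_zero, one_mul]
    rw [show (∏ i, (1 - Λ i * pinv)) = 0 from hrel]
    simp [PowerSeries.coeff_zero_eq_constantCoeff]
  | n + 1 =>
    rw [PowerSeries.coeff_succ_X_mul, PowerSeries.coeff_mk]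
    set A := ∏ i, ∏ r ∈ Finset.range n, (1 - q ^ (r + 1) * Λ i * pinv) with hA
    have hsplit : (∏ i, ∏ r ∈ Finset.range (n + 1), (1 - q ^ (r + 1) * Λ i * pinv))
        = A * ∏ i, (1 - q ^ (n + 1) * Λ i * pinv) := by
      rw [hA, ← Finset.prod_mul_distrib]
      exact Finset.prod_congr rfl fun i _ => by rw [Finset.prod_range_succ]
    have hBu : IsUnit (∏ i, (1 - q ^ (n + 1) * Λ i * pinv)) :=
      Finset.prod_induction _ IsUnit (fun _ _ => IsUnit.mul) isUnit_one
        fun i _ => hu i (n + 1) (Nat.succ_le_succ (Nat.zero_le n))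
    rw [hsplit, Ring.mul_inverse_rev' (Commute.all _ _), ← mul_assoc,
      Ring.mul_inverse_cancel _ hBu, one_mul]
end

section
/- Let A be a complex unital Banach algebra and let μ, ρ ∈ A satisfy μρ − ρμ = ρ. Define F : (0,∞) → A by F(z) = exp(−(log z)·μ) · exp((log z)·ρ). Then for every real z > 0, F is differentiable at z, and its derivative satisfies z·F′(z) + μ·F(z) − z⁻¹·ρ·F(z) = 0; that is, F(z) = z^{−μ} z^{ρ} is annihilated by the operator z∂_z + μ − ρ/z. -/
open NormedSpace

/-- Derivative of `t ↦ exp((t:ℂ)•x)` as a function of a real variable. -/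
lemma hasDerivAt_exp_real {A : Type*} [NormedRing A] [NormedAlgebra ℂ A] [CompleteSpace A]
    (x : A) (t : ℝ) :
    HasDerivAt (fun s : ℝ => exp ((s : ℂ) • x)) (x * exp ((t : ℂ) • x)) t := by
  have h1 : HasDerivAt (fun c : ℂ => exp (c • x)) (x * exp ((t : ℂ) • x)) ((t : ℝ) : ℂ) :=
    hasDerivAt_exp_smul_const' x (t : ℂ)
  have h2 : HasDerivAt (fun s : ℝ => (s : ℂ)) 1 t := by
    exact Complex.ofRealCLM.hasDerivAt (x := t)
  simpa [Function.comp_def] using h1.scomp t h2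

/-- Key conjugation identity: if `[μ,ρ] = ρ` then
`exp(-tμ) ρ exp(tμ) = e^{-t} ρ`. -/
lemma exp_conj_key {A : Type*} [NormedRing A] [NormedAlgebra ℂ A] [CompleteSpace A]
    (μ ρ : A) (h : μ * ρ - ρ * μ = ρ) (t : ℝ) :
    exp (-((t : ℂ) • μ)) * ρ * exp ((t : ℂ) • μ) = Real.exp (-t) • ρ := by
  set g : ℝ → A := fun t =>
    Real.exp t • (exp ((t : ℂ) • (-μ)) * ρ * exp ((t : ℂ) • μ)) with hg
  have hderiv : ∀ s : ℝ, HasDerivAt g 0 s := by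
    intro s
    have hm : HasDerivAt (fun u : ℝ => exp ((u : ℂ) • (-μ))) (-μ * exp ((s : ℂ) • (-μ))) s :=
      hasDerivAt_exp_real (-μ) s
    have hp : HasDerivAt (fun u : ℝ => exp ((u : ℂ) • μ)) (μ * exp ((s : ℂ) • μ)) s :=
      hasDerivAt_exp_real μ s
    have hin : HasDerivAt (fun u : ℝ => exp ((u : ℂ) • (-μ)) * ρ * exp ((u : ℂ) • μ))
        ((-μ * exp ((s : ℂ) • (-μ))) * ρ * exp ((s : ℂ) • μ)
          + exp ((s : ℂ) • (-μ)) * ρ * (μ * exp ((s : ℂ) • μ))) s :=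
      (hm.mul_const ρ).mul hp
    have hsm : HasDerivAt g
        (Real.exp s • ((-μ * exp ((s : ℂ) • (-μ))) * ρ * exp ((s : ℂ) • μ)
            + exp ((s : ℂ) • (-μ)) * ρ * (μ * exp ((s : ℂ) • μ)))
          + Real.exp s • (exp ((s : ℂ) • (-μ)) * ρ * exp ((s : ℂ) • μ))) s :=
      (Real.hasDerivAt_exp s).smul hin
    have hcomm : μ * exp ((s : ℂ) • (-μ)) = exp ((s : ℂ) • (-μ)) * μ := by
      have : Commute μ ((s : ℂ) • (-μ)) := by
        simpa using (Commute.refl μ).neg_right.smul_right (s : ℂ)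
      exact this.exp_right.eq
    have key : (-μ * exp ((s : ℂ) • (-μ))) * ρ * exp ((s : ℂ) • μ)
        + exp ((s : ℂ) • (-μ)) * ρ * (μ * exp ((s : ℂ) • μ))
        = -(exp ((s : ℂ) • (-μ)) * ρ * exp ((s : ℂ) • μ)) := by
      have hμρ : ρ * μ - μ * ρ = -ρ := by
        conv_rhs => rw [← h]
        abel
      calc (-μ * exp ((s : ℂ) • (-μ))) * ρ * exp ((s : ℂ) • μ)
          + exp ((s : ℂ) • (-μ)) * ρ * (μ * exp ((s : ℂ) • μ))
          = exp ((s : ℂ) • (-μ)) * ((ρ * μ - μ * ρ) * exp ((s : ℂ) • μ)) := by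
            rw [neg_mul, hcomm]; noncomm_ring
        _ = -(exp ((s : ℂ) • (-μ)) * ρ * exp ((s : ℂ) • μ)) := by
            rw [hμρ]; noncomm_ring
    have hzero : Real.exp s • ((-μ * exp ((s : ℂ) • (-μ))) * ρ * exp ((s : ℂ) • μ)
            + exp ((s : ℂ) • (-μ)) * ρ * (μ * exp ((s : ℂ) • μ)))
          + Real.exp s • (exp ((s : ℂ) • (-μ)) * ρ * exp ((s : ℂ) • μ)) = 0 := by
      rw [key, smul_neg]; abel
    exact hzero ▸ hsm
  have hconst : g t = g 0 :=
    is_const_of_deriv_eq_zero (fun s => (hderiv s).differentiableAt)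
      (fun s => (hderiv s).deriv) t 0
  have hg0 : g 0 = ρ := by simp [hg]
  have h2 : Real.exp t • (exp ((t : ℂ) • (-μ)) * ρ * exp ((t : ℂ) • μ)) = ρ :=
    hconst.trans hg0
  have h3 : exp ((t : ℂ) • (-μ)) * ρ * exp ((t : ℂ) • μ) = Real.exp (-t) • ρ := by
    calc exp ((t : ℂ) • (-μ)) * ρ * exp ((t : ℂ) • μ)
        = Real.exp (-t) • (Real.exp t •
            (exp ((t : ℂ) • (-μ)) * ρ * exp ((t : ℂ) • μ))) := by
          rw [smul_smul, ← Real.exp_add, neg_add_cancel, Real.exp_zero, one_smul]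
      _ = Real.exp (-t) • ρ := by rw [h2]
  rw [← smul_neg]
  exact h3

lemma exp_mul_key {A : Type*} [NormedRing A] [NormedAlgebra ℂ A] [CompleteSpace A]
    (μ ρ : A) (h : μ * ρ - ρ * μ = ρ) (t : ℝ) :
    exp (-((t : ℂ) • μ)) * ρ
      = Real.exp (-t) • (ρ * exp (-((t : ℂ) • μ))) := by
  have hinv : exp ((t : ℂ) • μ) * exp (-((t : ℂ) • μ)) = 1 := by
    rw [← NormedSpace.exp_add_of_commute_of_mem_ball (𝕂 := ℂ) (Commute.neg_right (Commute.refl _))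
      ((expSeries_radius_eq_top ℂ A).symm ▸ edist_lt_top _ _)
      ((expSeries_radius_eq_top ℂ A).symm ▸ edist_lt_top _ _)]
    simp
  calc exp (-((t : ℂ) • μ)) * ρ
      = exp (-((t : ℂ) • μ)) * ρ * (exp ((t : ℂ) • μ) * exp (-((t : ℂ) • μ))) := by
        rw [hinv, mul_one]
    _ = (exp (-((t : ℂ) • μ)) * ρ * exp ((t : ℂ) • μ)) * exp (-((t : ℂ) • μ)) := by
        noncomm_ring
    _ = Real.exp (-t) • (ρ * exp (-((t : ℂ) • μ))) := by
        rw [exp_conj_key μ ρ h t, smul_mul_assoc]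

/-- In a complex unital Banach algebra, if `[μ,ρ] = ρ`, then
`F(z) = z^{-μ} z^{ρ} = exp(-(log z)μ)·exp((log z)ρ)` is differentiable at every real
`z > 0` and is annihilated by the operator `z∂_z + μ - ρ/z`:
`z·F'(z) + μ·F(z) - z⁻¹·ρ·F(z) = 0`. -/
theorem stmt19 {A : Type*} [NormedRing A] [NormedAlgebra ℂ A] [CompleteSpace A]
    (μ ρ : A) (h : μ * ρ - ρ * μ = ρ) (z : ℝ) (hz : 0 < z) :
    DifferentiableAt ℝ
      (fun t : ℝ => NormedSpace.exp (-((Real.log t : ℂ) • μ)) *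
        NormedSpace.exp ((Real.log t : ℂ) • ρ)) z ∧
    (z : ℂ) • deriv
        (fun t : ℝ => NormedSpace.exp (-((Real.log t : ℂ) • μ)) *
          NormedSpace.exp ((Real.log t : ℂ) • ρ)) z
      + μ * (NormedSpace.exp (-((Real.log z : ℂ) • μ)) *
          NormedSpace.exp ((Real.log z : ℂ) • ρ))
      - (z : ℂ)⁻¹ • (ρ * (NormedSpace.exp (-((Real.log z : ℂ) • μ)) *
          NormedSpace.exp ((Real.log z : ℂ) • ρ))) = 0 := by
  have hz0 : z ≠ 0 := ne_of_gt hz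
  set L : ℝ := Real.log z with hL
  set E1 : A := exp (-((L : ℂ) • μ)) with hE1
  set E2 : A := exp ((L : ℂ) • ρ) with hE2
  have hlog : HasDerivAt Real.log z⁻¹ z := Real.hasDerivAt_log hz0
  have e1 : HasDerivAt (fun t : ℝ => exp (-((Real.log t : ℂ) • μ)))
      (z⁻¹ • (-μ * E1)) z := by
    have hg : HasDerivAt (fun s : ℝ => exp ((s : ℂ) • (-μ)))
        (-μ * exp ((L : ℂ) • (-μ))) (Real.log z) := hasDerivAt_exp_real (-μ) L
    have := hg.scomp z hlog
    simpa [Function.comp_def, smul_neg, hE1] using this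
  have e2 : HasDerivAt (fun t : ℝ => exp ((Real.log t : ℂ) • ρ))
      (z⁻¹ • (ρ * E2)) z := by
    have hg : HasDerivAt (fun s : ℝ => exp ((s : ℂ) • ρ))
        (ρ * exp ((L : ℂ) • ρ)) (Real.log z) := hasDerivAt_exp_real ρ L
    have := hg.scomp z hlog
    simpa [Function.comp_def, hE2] using this
  have hF : HasDerivAt
      (fun t : ℝ => exp (-((Real.log t : ℂ) • μ)) * exp ((Real.log t : ℂ) • ρ))
      ((z⁻¹ • (-μ * E1)) * E2 + E1 * (z⁻¹ • (ρ * E2))) z := e1.mul e2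
  refine ⟨hF.differentiableAt, ?_⟩
  rw [hF.deriv]
  -- convert real smul to complex smul and simplify
  have hsmul : ∀ a : A, (z : ℂ) • (z⁻¹ • a) = a := by
    intro a
    rw [← Complex.coe_smul, smul_smul, Complex.ofReal_inv, mul_inv_cancel₀, one_smul]
    exact_mod_cast hz0
  have hmulkey : E1 * ρ = Real.exp (-L) • (ρ * E1) := exp_mul_key μ ρ h L
  have hexpL : Real.exp (-L) = z⁻¹ := by
    rw [Real.exp_neg, hL, Real.exp_log hz]
  have hkey : E1 * (ρ * E2) = z⁻¹ • (ρ * (E1 * E2)) := by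
    rw [← mul_assoc, hmulkey, hexpL, smul_mul_assoc, mul_assoc]
  have hZinv : ((z : ℂ))⁻¹ • (ρ * (E1 * E2)) = (z⁻¹ : ℝ) • (ρ * (E1 * E2)) := by
    rw [← Complex.coe_smul, Complex.ofReal_inv]
  rw [smul_add, smul_mul_assoc, hsmul, mul_smul_comm, hsmul, hkey, hZinv]
  simp only [neg_mul, mul_assoc]
  abel
end
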